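/- arXiv:2511.13680 — 2 statements merged into one kernel-verified Lean document; each statement's English description precedes it below -/
import Mathlib

section
/- Under the condition ε ≥ max_t max_τ ‖θ*_t − θ̂_τ‖, the cross-learning error E_CL(ε) = (1/T)∑_t ‖θ†_t − θ*_t‖² is at most the separable error E_S = (1/T)∑_t ‖θ̂_t − θ*_t‖², where θ†_t is the projection of θ̂_t onto the ball B(θ†_g, ε). -/
/-!
Every `θ*_t` lies within `ε` of every `θ̂_τ`, so by convexity of closed balls it lies in
`B(θ†_g, ε)`. The radial retraction onto a ball never increases the distance to a point of
the ball, hence `‖θ†_t − θ*_t‖ ≤ ‖θ̂_t − θ*_t‖` term by term.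
-/

/-- Euclidean projection onto the closed ball of center `c` and radius `ε`. -/
noncomputable def projBall {d : ℕ} (c : EuclideanSpace ℝ (Fin d)) (ε : ℝ)
    (x : EuclideanSpace ℝ (Fin d)) : EuclideanSpace ℝ (Fin d) :=
  if ‖x - c‖ ≤ ε then x else c + (ε / ‖x - c‖) • (x - c)

open Metric

theorem norm_smul_sub_le_norm_sub {E : Type*} [NormedAddCommGroup E] [InnerProductSpace ℝ E]
    {s : ℝ} {u v : E} (hs0 : 0 ≤ s) (hs1 : s ≤ 1) (hv : ‖v‖ ≤ s * ‖u‖) :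
    ‖s • u - v‖ ≤ ‖u - v‖ := by
  have hinner : inner ℝ u v ≤ s * ‖u‖ ^ 2 :=
    calc inner ℝ u v ≤ ‖u‖ * ‖v‖ := real_inner_le_norm u v
      _ ≤ ‖u‖ * (s * ‖u‖) := by gcongr
      _ = s * ‖u‖ ^ 2 := by ring
  -- `‖u - v‖² - ‖s • u - v‖² = (1 - s) ((1 + s) ‖u‖² - 2 ⟪u, v⟫)`
  have hsq : ‖s • u - v‖ ^ 2 ≤ ‖u - v‖ ^ 2 := by
    rw [norm_sub_sq_real, norm_sub_sq_real, norm_smul, real_inner_smul_left,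
      Real.norm_of_nonneg hs0]
    nlinarith [mul_nonneg (sub_nonneg.2 hs1) (sub_nonneg.2 hinner),
      mul_nonneg (sub_nonneg.2 hs1) (mul_nonneg (sub_nonneg.2 hs1) (sq_nonneg ‖u‖))]
  exact (pow_le_pow_iff_left₀ (norm_nonneg _) (norm_nonneg _) two_ne_zero).1 hsq

theorem norm_projBall_sub_le {d : ℕ} {c x y : EuclideanSpace ℝ (Fin d)} {ε : ℝ}
    (hy : ‖y - c‖ ≤ ε) : ‖projBall c ε x - y‖ ≤ ‖x - y‖ := by
  unfold projBall
  split_ifs with hx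
  · exact le_rfl
  · have hε0 : 0 ≤ ε := (norm_nonneg _).trans hy
    have hlt : ε < ‖x - c‖ := not_le.1 hx
    have hxc : 0 < ‖x - c‖ := hε0.trans_lt hlt
    have hs : ε / ‖x - c‖ * ‖x - c‖ = ε := div_mul_cancel₀ ε hxc.ne'
    calc ‖c + (ε / ‖x - c‖) • (x - c) - y‖ = ‖(ε / ‖x - c‖) • (x - c) - (y - c)‖ := by
          congr 1; abel
      _ ≤ ‖(x - c) - (y - c)‖ :=
          norm_smul_sub_le_norm_sub (div_nonneg hε0 hxc.le) ((div_le_one hxc).2 hlt.le)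
            (by rwa [hs])
      _ = ‖x - y‖ := by rw [sub_sub_sub_cancel_right]

theorem stmt_6_general {d : ℕ} (T : ℕ) (ε : ℝ)
    (θstar θhat θdag : Fin T → EuclideanSpace ℝ (Fin d))
    (hε : ∀ t τ, ‖θstar t - θhat τ‖ ≤ ε)
    (γ : Fin T → ℝ) (hγ0 : ∀ τ, 0 ≤ γ τ) (hγ1 : ∑ τ, γ τ = 1)
    (θg : EuclideanSpace ℝ (Fin d)) (hθg : θg = ∑ τ, γ τ • θhat τ)
    (hθdag : ∀ t, θdag t = projBall θg ε (θhat t)) :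
    (T : ℝ)⁻¹ * ∑ t, ‖θdag t - θstar t‖ ^ 2 ≤
      (T : ℝ)⁻¹ * ∑ t, ‖θhat t - θstar t‖ ^ 2 := by
  have hstar : ∀ t, ‖θstar t - θg‖ ≤ ε := fun t => by
    have hmem : θg ∈ closedBall (θstar t) ε := hθg ▸
      (convex_closedBall (θstar t) ε).sum_mem (fun τ _ => hγ0 τ) hγ1
        (fun τ _ => mem_closedBall'.2 ((dist_eq_norm _ _).trans_le (hε t τ)))
    rwa [mem_closedBall', dist_eq_norm] at hmem
  gcongr with t
  rw [hθdag t]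
  exact norm_projBall_sub_le (hstar t)

/-- if `ε ≥ max_t max_τ ‖θ*_t − θ̂_τ‖`, the cross-learning error is at most
the separable error. -/
theorem stmt_6 {d : ℕ} (T : ℕ) (hT : 0 < T) (ε : ℝ)
    (θstar θhat θdag : Fin T → EuclideanSpace ℝ (Fin d))
    (hε : ∀ t τ, ‖θstar t - θhat τ‖ ≤ ε)
    (γ : Fin T → ℝ) (hγ0 : ∀ τ, 0 ≤ γ τ) (hγ1 : ∑ τ, γ τ = 1)
    (θg : EuclideanSpace ℝ (Fin d)) (hθg : θg = ∑ τ, γ τ • θhat τ)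
    (hθdag : ∀ t, θdag t = projBall θg ε (θhat t)) :
    (T : ℝ)⁻¹ * ∑ t, ‖θdag t - θstar t‖ ^ 2 ≤
      (T : ℝ)⁻¹ * ∑ t, ‖θhat t - θstar t‖ ^ 2 :=
  stmt_6_general T ε θstar θhat θdag hε γ hγ0 hγ1 θg hθg hθdag
end

section
/- Let v ~ N(0, σ²I_d) be a standard isotropic Gaussian in ℝ^d (d ≥ 2), let m ∈ ℝ^d with m ≠ 0, and define u = (m + v)/‖m + v‖. Then E[u] = a·m for some strictly positive scalar a > 0. -/
/-!
The Gaussian is invariant under every linear isometry. The reflection in the line `ℝ ∙ m` fixes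
`m`, so it commutes with `v ↦ (m + v) / ‖m + v‖` and fixes the expectation, which therefore lies
on that line. For the sign, pair `v` with `-v`: with `x = m + v` and `y = m - v` we get
`2 ⟪m, x / ‖x‖ + y / ‖y‖⟫ = (‖x‖ + ‖y‖) (‖x‖ ‖y‖ + ⟪x, y⟫) / (‖x‖ ‖y‖)`, which is positive
unless `x` and `y` are antiparallel, i.e. unless `v ∈ ℝ ∙ m`, a null set when `d ≥ 2`.
-/

open MeasureTheory

/-- The isotropic Gaussian measure `N(0, s²·I)` on `ℝ^d`, given by its density with
respect to Lebesgue measure. -/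
noncomputable def isoGaussian (d : ℕ) (s2 : ℝ) :
    Measure (EuclideanSpace ℝ (Fin d)) :=
  volume.withDensity fun v => ENNReal.ofReal
    ((2 * Real.pi * s2) ^ (-(d : ℝ) / 2) * Real.exp (-‖v‖ ^ 2 / (2 * s2)))

open scoped InnerProductSpace

section InnerProduct

variable {F : Type*} [NormedAddCommGroup F] [InnerProductSpace ℝ F]

theorem inner_add_inv_norm_smul_add_pos {x y : F} (h : -(‖x‖ * ‖y‖) < ⟪x, y⟫_ℝ) :
    0 < ⟪x + y, ‖x‖⁻¹ • x + ‖y‖⁻¹ • y⟫_ℝ := by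
  have hx : 0 < ‖x‖ := norm_pos_iff.2 fun hx => by simp [hx] at h
  have hy : 0 < ‖y‖ := norm_pos_iff.2 fun hy => by simp [hy] at h
  have hexpand : ⟪x + y, ‖x‖⁻¹ • x + ‖y‖⁻¹ • y⟫_ℝ
      = (‖x‖ + ‖y‖) * (‖x‖ * ‖y‖ + ⟪x, y⟫_ℝ) / (‖x‖ * ‖y‖) := by
    simp only [inner_add_left, inner_add_right, real_inner_smul_right,
      real_inner_self_eq_norm_sq, real_inner_comm x y]
    field_simp
    ring
  rw [hexpand]
  have : 0 < ‖x‖ * ‖y‖ + ⟪x, y⟫_ℝ := by linarith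
  positivity

theorem neg_norm_mul_lt_inner_add_sub {m v : F} (hm : m ≠ 0) (hv : v ∉ ℝ ∙ m) :
    -(‖m + v‖ * ‖m - v‖) < ⟪m + v, m - v⟫_ℝ := by
  refine (neg_le_of_abs_le (abs_real_inner_le_norm _ _)).lt_of_ne fun h => hv ?_
  have hpar : ‖m - v‖ • (m + v) = ‖m + v‖ • -(m - v) := by
    rw [← norm_neg (m - v), ← inner_eq_norm_mul_iff_real, inner_neg_right, norm_neg, ← h, neg_neg]
  -- `m + v` and `m - v` are antiparallel, so `a • m = b • v` with `a ≥ ‖2 • m‖ > 0`.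
  set a := ‖m + v‖ + ‖m - v‖
  set b := ‖m + v‖ - ‖m - v‖
  have hab : a • m = b • v := by
    linear_combination (norm := module) hpar
  have ha : 0 < a := by
    have : ‖(2 : ℝ) • m‖ ≤ a := by
      rw [two_smul]
      calc ‖m + m‖ = ‖(m + v) + (m - v)‖ := by abel_nf
        _ ≤ a := norm_add_le _ _
    have : 0 < ‖(2 : ℝ) • m‖ := norm_pos_iff.2 (smul_ne_zero two_ne_zero hm)
    linarith
  have hb : b ≠ 0 := by
    rintro hb
    rw [hb, zero_smul, smul_eq_zero] at hab
    exact hab.elim ha.ne' hm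
  refine Submodule.mem_span_singleton.2 ⟨b⁻¹ * a, ?_⟩
  rw [mul_smul, hab, inv_smul_smul₀ hb]

theorem LinearIsometry.inv_norm_smul_add_map {m : F} (L : F →ₗᵢ[ℝ] F) (hL : L m = m) (v : F) :
    ‖m + L v‖⁻¹ • (m + L v) = L (‖m + v‖⁻¹ • (m + v)) := by
  have hadd : m + L v = L (m + v) := by rw [L.map_add, hL]
  rw [hadd, L.norm_map, L.map_smul]

end InnerProduct

theorem MeasureTheory.MeasurePreserving.linearIsometry_integral_eq_of_comp_eq
    {X F : Type*} [MeasurableSpace X] {μ : Measure X} [NormedAddCommGroup F]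
    [NormedSpace ℝ F] [CompleteSpace F] {T : X → X} (hT : MeasurePreserving T μ μ)
    (hTe : MeasurableEmbedding T) (L : F →ₗᵢ[ℝ] F) {f : X → F} (hf : ∀ x, f (T x) = L (f x)) :
    L (∫ x, f x ∂μ) = ∫ x, f x ∂μ := by
  rw [← L.integral_comp_comm]
  simp_rw [← hf]
  exact hT.integral_comp hTe f

section Integral

variable {E : Type*} [NormedAddCommGroup E] [InnerProductSpace ℝ E] [MeasurableSpace E]
  [BorelSpace E] {μ : Measure E}

theorem integral_inv_norm_smul_add_mem_span [CompleteSpace E] {m : E}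
    (hμ : MeasurePreserving (ℝ ∙ m).reflection μ μ) :
    ∫ v, ‖m + v‖⁻¹ • (m + v) ∂μ ∈ ℝ ∙ m := by
  set R := (ℝ ∙ m).reflection
  rw [← Submodule.reflection_eq_self_iff]
  exact hμ.linearIsometry_integral_eq_of_comp_eq R.toHomeomorph.measurableEmbedding
    R.toLinearIsometry (R.toLinearIsometry.inv_norm_smul_add_map
      ((ℝ ∙ m).reflection_mem_subspace_eq_self (Submodule.mem_span_singleton_self m)))

theorem integrable_inv_norm_smul_add [SecondCountableTopology E] [IsFiniteMeasure μ] (m : E) :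
    Integrable (fun v => ‖m + v‖⁻¹ • (m + v)) μ := by
  refine .of_bound (Measurable.aestronglyMeasurable (by fun_prop)) 1 (.of_forall fun v => ?_)
  rw [norm_smul, norm_inv, norm_norm]
  exact inv_mul_le_one_of_le₀ le_rfl (norm_nonneg _)

theorem inner_integral_inv_norm_smul_add_pos [SecondCountableTopology E] [CompleteSpace E]
    [IsFiniteMeasure μ] [NeZero μ] [μ.IsNegInvariant] {m : E} (hm : m ≠ 0)
    (hnull : μ (ℝ ∙ m) = 0) :
    0 < ⟪m, ∫ v, ‖m + v‖⁻¹ • (m + v) ∂μ⟫_ℝ := by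
  set f : E → E := fun v => ‖m + v‖⁻¹ • (m + v)
  have hf : Integrable f μ := integrable_inv_norm_smul_add m
  have hf_neg : Integrable (fun v => f (-v)) μ := hf.comp_neg
  set g : E → ℝ := fun v => ⟪m, f v + f (-v)⟫_ℝ
  have hg : Integrable g μ := (hf.add hf_neg).const_inner m
  have hg_eq : ∫ v, g v ∂μ = 2 * ⟪m, ∫ v, f v ∂μ⟫_ℝ := by
    simp only [g]
    rw [integral_inner (f := fun v => f v + f (-v)) (hf.add hf_neg), integral_add hf hf_neg,
      integral_neg_eq_self, ← two_smul ℝ, real_inner_smul_right]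
  -- `2 * g v` is the inner product of `(m + v) + (m - v)` with the sum of their normalizations.
  have hg_pos : ∀ v ∉ ℝ ∙ m, 0 < g v := by
    intro v hv
    have h := inner_add_inv_norm_smul_add_pos (neg_norm_mul_lt_inner_add_sub hm hv)
    have h2m : m + v + (m - v) = (2 : ℝ) • m := by module
    rw [h2m, real_inner_smul_left] at h
    simp only [g, f, ← sub_eq_add_neg]
    linarith
  have hae : ∀ᵐ v ∂μ, 0 < g v :=
    measure_mono_null (fun v hv => by_contra fun hvm => hv (hg_pos v hvm)) hnull
  have hint_pos : 0 < ∫ v, g v ∂μ := by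
    refine (integral_pos_iff_support_of_nonneg_ae (hae.mono fun v => le_of_lt) hg).2 ?_
    rw [measure_congr (ae_eq_univ.2 (measure_mono_null (fun v hv => ?_) (ae_iff.1 hae))),
      Measure.measure_univ_pos]
    · exact NeZero.ne μ
    · simp_all
  linarith

end Integral

theorem MeasureTheory.MeasurePreserving.withDensity_of_comp_eq {X : Type*} [MeasurableSpace X]
    {ν : Measure X} {T : X → X} (hT : MeasurePreserving T ν ν) (hTe : MeasurableEmbedding T)
    {g : X → ENNReal} (hg : ∀ x, g (T x) = g x) :
    MeasurePreserving T (ν.withDensity g) (ν.withDensity g) := by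
  refine ⟨hT.measurable, Measure.ext fun s hs => ?_⟩
  rw [Measure.map_apply hT.measurable hs, withDensity_apply _ (hs.preimage hT.measurable),
    withDensity_apply _ hs]
  simpa only [hg] using hT.setLIntegral_comp_preimage_emb hTe g s

section isoGaussian

variable {d : ℕ} {s2 : ℝ}

theorem isoGaussian_measurePreserving
    (L : EuclideanSpace ℝ (Fin d) ≃ₗᵢ[ℝ] EuclideanSpace ℝ (Fin d)) :
    MeasurePreserving L (isoGaussian d s2) (isoGaussian d s2) :=
  L.measurePreserving.withDensity_of_comp_eq L.toHomeomorph.measurableEmbedding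
    fun v => by rw [L.norm_map]

instance : (isoGaussian d s2).IsNegInvariant :=
  ⟨(isoGaussian_measurePreserving (LinearIsometryEquiv.neg ℝ)).map_eq⟩

theorem integral_isoGaussian_density (hs : 0 < s2) :
    ∫ v : EuclideanSpace ℝ (Fin d),
      (2 * Real.pi * s2) ^ (-(d : ℝ) / 2) * Real.exp (-‖v‖ ^ 2 / (2 * s2)) = 1 := by
  have hexp : ∀ v : EuclideanSpace ℝ (Fin d),
      Real.exp (-‖v‖ ^ 2 / (2 * s2)) = Real.exp (-(2 * s2)⁻¹ * ‖v‖ ^ 2) := fun v => by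
    congr 1; ring
  simp_rw [integral_const_mul, hexp]
  rw [GaussianFourier.integral_rexp_neg_mul_sq_norm (by positivity), finrank_euclideanSpace_fin,
    div_inv_eq_mul, neg_div, Real.rpow_neg (by positivity), ← mul_assoc,
    mul_comm Real.pi 2, inv_mul_cancel₀ (by positivity)]

theorem isProbabilityMeasure_isoGaussian (hs : 0 < s2) :
    IsProbabilityMeasure (isoGaussian d s2) := by
  have h := integral_isoGaussian_density (d := d) hs
  constructor
  rw [isoGaussian, withDensity_apply _ MeasurableSet.univ, setLIntegral_univ,
    ← ofReal_integral_eq_lintegral_ofReal (integrable_of_integral_eq_one h)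
      (.of_forall fun v => by positivity), h, ENNReal.ofReal_one]

end isoGaussian

/-- for `v ~ N(0, σ²I)` in `ℝ^d` (`d ≥ 2`) and `m ≠ 0`, the expectation of
the unit vector `(m+v)/‖m+v‖` equals `a·m` for some strictly positive scalar `a`. -/
theorem stmt_11 (d : ℕ) (hd : 2 ≤ d) (σ : ℝ) (hσ : 0 < σ)
    (m : EuclideanSpace ℝ (Fin d)) (hm : m ≠ 0) :
    ∃ a : ℝ, 0 < a ∧
      (∫ v, ‖m + v‖⁻¹ • (m + v) ∂(isoGaussian d (σ ^ 2))) = a • m := by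
  have := isProbabilityMeasure_isoGaussian (d := d) (pow_pos hσ 2)
  have hK : (ℝ ∙ m) ≠ ⊤ := fun h => by
    have := finrank_span_singleton (K := ℝ) hm
    rw [h, finrank_top, finrank_euclideanSpace_fin] at this
    omega
  have hnull : isoGaussian d (σ ^ 2) (ℝ ∙ m) = 0 :=
    withDensity_absolutelyContinuous _ _ (Measure.addHaar_submodule volume _ hK)
  obtain ⟨a, ha⟩ := Submodule.mem_span_singleton.1
    (integral_inv_norm_smul_add_mem_span (isoGaussian_measurePreserving _))
  have hpos := inner_integral_inv_norm_smul_add_pos hm hnull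
  rw [← ha, real_inner_smul_right, real_inner_self_eq_norm_sq] at hpos
  exact ⟨a, pos_of_mul_pos_left hpos (by positivity), ha.symm⟩
end
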